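/- arXiv:math/0604174 — 4 statements merged into one kernel-verified Lean document; each statement's English description precedes it below -/
import Mathlib

section
/- Let X₁ and X₂ be forests and let A be a subset of X = X₁ × X₂ (with the componentwise order). Let A₁ be the set of all points x ∈ X such that x = y ∨ z for some c-comparable y, z ∈ A, and let A₂ be the set of all t = (t₁, t₂) ∈ X such that t₁ ≤ x₁ and t₂ ≤ x₂ for some (x₁, x₂) ∈ A₁. Then A₂ is hereditary, concave, contains A, and is equal to the c.h-envelope of A. -/
/-- A partial order is a *forest* if for every point `x`, the set `{y : x ≤ y}`
is finite and totally ordered. -/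
def IsForest (α : Type*) [Preorder α] : Prop :=
  ∀ x : α, (Set.Ici x).Finite ∧ IsChain (· ≤ ·) (Set.Ici x)

open Classical in
/-- The maximum of two comparable elements of a partial order. -/
noncomputable def pmax {α : Type*} [Preorder α] (a b : α) : α :=
  if a ≤ b then b else a

/-- Two points of a product of two partial orders are coordinate-wise comparable. -/
def CComp2 {α β : Type*} [Preorder α] [Preorder β] (x y : α × β) : Prop :=
  (x.1 ≤ y.1 ∨ y.1 ≤ x.1) ∧ (x.2 ≤ y.2 ∨ y.2 ≤ x.2)

/-- The componentwise maximum of two (c-comparable) points of a product. -/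
noncomputable def Vee2 {α β : Type*} [Preorder α] [Preorder β] (x y : α × β) : α × β :=
  (pmax x.1 y.1, pmax x.2 y.2)

/-- A subset of a product of two partial orders is *concave* if it contains the
componentwise maximum of any two of its c-comparable points. -/
def IsConcave2 {α β : Type*} [Preorder α] [Preorder β] (A : Set (α × β)) : Prop :=
  ∀ x ∈ A, ∀ y ∈ A, CComp2 x y → Vee2 x y ∈ A

/-- The c.h-envelope of `A`: the smallest hereditary (lower) concave set containing `A`. -/
def chEnv2 {α β : Type*} [Preorder α] [Preorder β] (A : Set (α × β)) : Set (α × β) :=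
  ⋂₀ {B : Set (α × β) | A ⊆ B ∧ IsLowerSet B ∧ IsConcave2 B}

lemma pmax_cases {α : Type*} [Preorder α] (a b : α) : pmax a b = a ∨ pmax a b = b := by
  unfold pmax; split_ifs <;> simp

lemma le_pmax_left {α : Type*} [Preorder α] (a b : α) : a ≤ pmax a b := by
  unfold pmax; split_ifs with h
  · exact h
  · exact le_refl a

lemma le_pmax_right {α : Type*} [Preorder α] {a b : α} (h : a ≤ b ∨ b ≤ a) :
    b ≤ pmax a b := by
  unfold pmax; split_ifs with h'
  · exact le_refl b
  · exact h.resolve_left h'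

lemma pmax_eq_right {α : Type*} [Preorder α] {a b : α} (h : a ≤ b) : pmax a b = b := by
  unfold pmax; rw [if_pos h]

lemma pmax_eq_left {α : Type*} [PartialOrder α] {a b : α} (h : b ≤ a) : pmax a b = a := by
  unfold pmax; split_ifs with h'
  · exact le_antisymm h h'
  · rfl

lemma forest_comp {α : Type*} [Preorder α] (hα : IsForest α) {a b c : α}
    (hab : a ≤ b) (hac : a ≤ c) : b ≤ c ∨ c ≤ b := by
  rcases eq_or_ne b c with rfl | hne
  · exact Or.inl le_rfl
  · exact (hα a).2 hab hac hne

lemma max4 {α : Type*} [Preorder α] {a b a' b' : α}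
    (h1 : a ≤ b ∨ b ≤ a) (h2 : a' ≤ b' ∨ b' ≤ a')
    (h3 : pmax a b ≤ pmax a' b' ∨ pmax a' b' ≤ pmax a b) :
    ∃ w, (w = a ∨ w = b ∨ w = a' ∨ w = b') ∧ a ≤ w ∧ b ≤ w ∧ a' ≤ w ∧ b' ≤ w ∧
      pmax (pmax a b) (pmax a' b') = w := by
  refine ⟨pmax (pmax a b) (pmax a' b'), ?_, ?_, ?_, ?_, ?_, rfl⟩
  · rcases pmax_cases (pmax a b) (pmax a' b') with h | h <;> rw [h]
    · rcases pmax_cases a b with h' | h' <;> simp [h']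
    · rcases pmax_cases a' b' with h' | h' <;> simp [h']
  · exact le_trans (le_pmax_left a b) (le_pmax_left _ _)
  · exact le_trans (le_pmax_right h1) (le_pmax_left _ _)
  · exact le_trans (le_pmax_left a' b') (le_pmax_right h3)
  · exact le_trans (le_pmax_right h2) (le_pmax_right h3)

/-- For forests `X₁, X₂` and `A ⊆ X₁ × X₂`, with `A₁` the set of joins of pairs of
c-comparable points of `A` and `A₂` the lower closure of `A₁`, the set `A₂` is
hereditary, concave, contains `A`, and equals the c.h-envelope of `A`. -/
theorem statement0 {α β : Type*} [PartialOrder α] [PartialOrder β]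
    (hα : IsForest α) (hβ : IsForest β) (A : Set (α × β))
    (A₁ : Set (α × β))
    (hA₁ : A₁ = {x | ∃ y ∈ A, ∃ z ∈ A, CComp2 y z ∧ x = Vee2 y z})
    (A₂ : Set (α × β))
    (hA₂ : A₂ = {t | ∃ x ∈ A₁, t.1 ≤ x.1 ∧ t.2 ≤ x.2}) :
    IsLowerSet A₂ ∧ IsConcave2 A₂ ∧ A ⊆ A₂ ∧ A₂ = chEnv2 A := by
  subst hA₁ hA₂
  -- A₁ is closed under joins of c-comparable pairs
  have key : ∀ x ∈ {x | ∃ y ∈ A, ∃ z ∈ A, CComp2 y z ∧ x = Vee2 y z},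
      ∀ x' ∈ {x | ∃ y ∈ A, ∃ z ∈ A, CComp2 y z ∧ x = Vee2 y z},
      CComp2 x x' → Vee2 x x' ∈ {x | ∃ y ∈ A, ∃ z ∈ A, CComp2 y z ∧ x = Vee2 y z} := by
    rintro x ⟨y, hy, z, hz, hyz, rfl⟩ x' ⟨y', hy', z', hz', hyz', rfl⟩ hc
    obtain ⟨w1, hw1mem, hw1a, hw1b, hw1a', hw1b', hw1eq⟩ :=
      max4 hyz.1 hyz'.1 hc.1
    obtain ⟨w2, hw2mem, hw2a, hw2b, hw2a', hw2b', hw2eq⟩ :=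
      max4 hyz.2 hyz'.2 hc.2
    -- pick the element of A whose first coordinate is w1, and whose second is w2
    have h1 : ∃ c ∈ A, c.1 = w1 ∧ (c = y ∨ c = z ∨ c = y' ∨ c = z') := by
      rcases hw1mem with h | h | h | h
      · exact ⟨y, hy, h.symm, Or.inl rfl⟩
      · exact ⟨z, hz, h.symm, Or.inr (Or.inl rfl)⟩
      · exact ⟨y', hy', h.symm, Or.inr (Or.inr (Or.inl rfl))⟩
      · exact ⟨z', hz', h.symm, Or.inr (Or.inr (Or.inr rfl))⟩
    have h2 : ∃ d ∈ A, d.2 = w2 ∧ (d = y ∨ d = z ∨ d = y' ∨ d = z') := by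
      rcases hw2mem with h | h | h | h
      · exact ⟨y, hy, h.symm, Or.inl rfl⟩
      · exact ⟨z, hz, h.symm, Or.inr (Or.inl rfl)⟩
      · exact ⟨y', hy', h.symm, Or.inr (Or.inr (Or.inl rfl))⟩
      · exact ⟨z', hz', h.symm, Or.inr (Or.inr (Or.inr rfl))⟩
    obtain ⟨c, hcA, hc1, hcmem⟩ := h1
    obtain ⟨d, hdA, hd2, hdmem⟩ := h2
    have hdc1 : d.1 ≤ c.1 := by
      rw [hc1]; rcases hdmem with rfl | rfl | rfl | rfl <;> assumption
    have hcd2 : c.2 ≤ d.2 := by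
      rw [hd2]; rcases hcmem with rfl | rfl | rfl | rfl <;> assumption
    refine ⟨c, hcA, d, hdA, ⟨Or.inr hdc1, Or.inl hcd2⟩, ?_⟩
    show Vee2 (Vee2 y z) (Vee2 y' z') = Vee2 c d
    simp only [Vee2, Prod.mk.injEq]
    constructor
    · rw [hw1eq, pmax_eq_left hdc1, hc1]
    · rw [hw2eq, pmax_eq_right hcd2, hd2]
  have hAsub : A ⊆ {t | ∃ x ∈ {x | ∃ y ∈ A, ∃ z ∈ A, CComp2 y z ∧ x = Vee2 y z},
      t.1 ≤ x.1 ∧ t.2 ≤ x.2} := by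
    intro a ha
    refine ⟨a, ⟨a, ha, a, ha, ⟨Or.inl le_rfl, Or.inl le_rfl⟩, ?_⟩, le_rfl, le_rfl⟩
    show a = Vee2 a a
    simp [Vee2, pmax_eq_right le_rfl]
  have hLower : IsLowerSet {t : α × β | ∃ x ∈ {x | ∃ y ∈ A, ∃ z ∈ A, CComp2 y z ∧ x = Vee2 y z},
      t.1 ≤ x.1 ∧ t.2 ≤ x.2} := by
    rintro t s hst ⟨x, hx, h1, h2⟩
    exact ⟨x, hx, le_trans hst.1 h1, le_trans hst.2 h2⟩
  have hConc : IsConcave2 {t : α × β | ∃ x ∈ {x | ∃ y ∈ A, ∃ z ∈ A, CComp2 y z ∧ x = Vee2 y z},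
      t.1 ≤ x.1 ∧ t.2 ≤ x.2} := by
    rintro t ⟨x, hx, ht1, ht2⟩ s ⟨x', hx', hs1, hs2⟩ hts
    have hcomp1 : x.1 ≤ x'.1 ∨ x'.1 ≤ x.1 := by
      rcases hts.1 with h | h
      · exact forest_comp hα ht1 (le_trans h hs1)
      · exact forest_comp hα (le_trans h ht1) hs1
    have hcomp2 : x.2 ≤ x'.2 ∨ x'.2 ≤ x.2 := by
      rcases hts.2 with h | h
      · exact forest_comp hβ ht2 (le_trans h hs2)
      · exact forest_comp hβ (le_trans h ht2) hs2
    refine ⟨Vee2 x x', key x hx x' hx' ⟨hcomp1, hcomp2⟩, ?_, ?_⟩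
    · rcases pmax_cases t.1 s.1 with h | h <;> show pmax t.1 s.1 ≤ pmax x.1 x'.1 <;> rw [h]
      · exact le_trans ht1 (le_pmax_left _ _)
      · exact le_trans hs1 (le_pmax_right hcomp1)
    · rcases pmax_cases t.2 s.2 with h | h <;> show pmax t.2 s.2 ≤ pmax x.2 x'.2 <;> rw [h]
      · exact le_trans ht2 (le_pmax_left _ _)
      · exact le_trans hs2 (le_pmax_right hcomp2)
  refine ⟨hLower, hConc, hAsub, ?_⟩
  apply le_antisymm
  · intro t ht B hB
    obtain ⟨hAB, hBlow, hBconc⟩ := hB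
    obtain ⟨x, ⟨y, hy, z, hz, hyz, rfl⟩, h1, h2⟩ := ht
    exact hBlow ⟨h1, h2⟩ (hBconc y (hAB hy) z (hAB hz) hyz)
  · exact Set.sInter_subset_of_mem ⟨hAsub, hLower, hConc⟩
end

section
/- Let X₁, …, X_n be forests (n ≥ 1) and let A be a subset of X = X₁ × ⋯ × X_n (with the componentwise order). Let A₁ be the set of all x ∈ X for which there exist elements x¹, x², …, xⁿ of A such that for all indices i, j ∈ {1, …, n} one has x_j = (x^j)_j and (x^i)_j ≤ x_j. Let A₂ be the set of all y ∈ X such that y ≤ x (componentwise) for some x ∈ A₁. Then A₂ contains the c.h-envelope of A; equivalently, A₂ is hereditary, concave, and contains A. -/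
/-- Two points of a product of partial orders are coordinate-wise comparable. -/
def CCompPi {n : ℕ} {X : Fin n → Type*} [∀ i, Preorder (X i)] (x y : ∀ i, X i) : Prop :=
  ∀ i, x i ≤ y i ∨ y i ≤ x i

/-- The componentwise maximum of two (c-comparable) points of a product. -/
noncomputable def VeePi {n : ℕ} {X : Fin n → Type*} [∀ i, Preorder (X i)]
    (x y : ∀ i, X i) : ∀ i, X i :=
  fun i => pmax (x i) (y i)

/-- A subset of a product of partial orders is *concave* if it contains the
componentwise maximum of any two of its c-comparable points. -/
def IsConcavePi {n : ℕ} {X : Fin n → Type*} [∀ i, Preorder (X i)]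
    (A : Set (∀ i, X i)) : Prop :=
  ∀ x ∈ A, ∀ y ∈ A, CCompPi x y → VeePi x y ∈ A

/-- The c.h-envelope of `A`: the smallest hereditary (lower) concave set containing `A`. -/
def chEnvPi {n : ℕ} {X : Fin n → Type*} [∀ i, Preorder (X i)]
    (A : Set (∀ i, X i)) : Set (∀ i, X i) :=
  ⋂₀ {B : Set (∀ i, X i) | A ⊆ B ∧ IsLowerSet B ∧ IsConcavePi B}

lemma pmax_le_left {α : Type*} [Preorder α] {a b : α} (h : b ≤ a) : pmax a b ≤ a := by
  unfold pmax; split <;> simp [h]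

/-- Let `X₁, …, Xₙ` be forests (`n ≥ 1`) and `A ⊆ X₁ × ⋯ × Xₙ`.  Let `A₁` be the set
of `x` for which there are `x¹, …, xⁿ ∈ A` with `x_j = (x^j)_j` and `(x^i)_j ≤ x_j`
for all `i, j`, and let `A₂` be the lower closure of `A₁`. Then `A₂` contains the
c.h-envelope of `A`; equivalently, `A₂` is hereditary, concave and contains `A`. -/
theorem statement2 {n : ℕ} (hn : 1 ≤ n) {X : Fin n → Type*} [∀ i, PartialOrder (X i)]
    (hX : ∀ i, IsForest (X i)) (A : Set (∀ i, X i))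
    (A₁ : Set (∀ i, X i))
    (hA₁ : A₁ = {x | ∃ w : Fin n → ∀ i, X i,
      (∀ j, w j ∈ A) ∧ (∀ j, x j = w j j) ∧ ∀ i j, w i j ≤ x j})
    (A₂ : Set (∀ i, X i))
    (hA₂ : A₂ = {y | ∃ x ∈ A₁, y ≤ x}) :
    chEnvPi A ⊆ A₂ ∧ A ⊆ A₂ ∧ IsLowerSet A₂ ∧ IsConcavePi A₂ := by
  classical
  have hAsub : A ⊆ A₂ := by
    intro a ha
    rw [hA₂]
    refine ⟨a, ?_, le_refl a⟩
    rw [hA₁]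
    exact ⟨fun _ => a, fun _ => ha, fun _ => rfl, fun _ _ => le_refl _⟩
  have hlower : IsLowerSet A₂ := by
    intro u v hvu hu
    rw [hA₂] at hu ⊢
    obtain ⟨x, hx, hux⟩ := hu
    exact ⟨x, hx, le_trans hvu hux⟩
  have hconc : IsConcavePi A₂ := by
    intro y hy y' hy' hc
    rw [hA₂] at hy hy' ⊢
    obtain ⟨x, hx, hyx⟩ := hy
    obtain ⟨x', hx', hyx'⟩ := hy'
    rw [hA₁] at hx hx'
    obtain ⟨w, hwA, hwd, hwle⟩ := hx
    obtain ⟨w', hwA', hwd', hwle'⟩ := hx'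
    -- x j and x' j are comparable, since both lie above min (y j) (y' j) in a forest
    have hcomp : ∀ j, x j ≤ x' j ∨ x' j ≤ x j := by
      intro j
      rcases hc j with h | h
      · exact (hX j (y j)).2.total (hyx j) (le_trans h (hyx' j))
      · exact (hX j (y' j)).2.total (le_trans h (hyx j)) (hyx' j)
    refine ⟨VeePi x x', ?_, fun j => ?_⟩
    · rw [hA₁]
      refine ⟨fun j => if x' j ≤ x j then w j else w' j, fun j => ?_, fun j => ?_,
        fun i j => ?_⟩
      · dsimp only; split <;> [exact hwA j; exact hwA' j]
      · dsimp only [VeePi]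
        by_cases h : x' j ≤ x j
        · simp only [h, if_true]
          have := pmax_cases (x j) (x' j)
          rcases this with he | he
          · rw [he]; exact hwd j
          · rw [he, le_antisymm h (he ▸ le_pmax_left (x j) (x' j))]; exact hwd j
        · simp only [h, if_false]
          rcases hcomp j with h2 | h2
          · have : pmax (x j) (x' j) = x' j := by
              unfold pmax; simp [h2]
            rw [this]; exact hwd' j
          · exact absurd h2 h
      · dsimp only [VeePi]
        by_cases h : x' i ≤ x i <;> simp only [h, if_true, if_false]
        · exact le_trans (hwle i j) (le_pmax_left _ _)
        · exact le_trans (hwle' i j) (le_pmax_right (hcomp j))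
    · dsimp only [VeePi]
      rcases pmax_cases (y j) (y' j) with he | he <;> rw [he]
      · exact le_trans (hyx j) (le_pmax_left _ _)
      · exact le_trans (hyx' j) (le_pmax_right (hcomp j))
  refine ⟨?_, hAsub, hlower, hconc⟩
  intro z hz
  exact hz A₂ ⟨hAsub, hlower, hconc⟩
end

section
/- Let γ = log(3/2)/log 2. Then γ ∈ (0,1), the function f(u) = u^γ + 2(1 − u)^γ is concave on the interval [0, 1/2], f(0) = 2 and f(1/2) = 2; consequently f(u) ≥ 2 for every u ∈ [0, 1/2]. -/
/-- For `γ = log(3/2)/log 2` one has `γ ∈ (0,1)`, the function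
`f(u) = u^γ + 2(1 − u)^γ` is concave on `[0, 1/2]`, `f(0) = f(1/2) = 2`, and
consequently `f(u) ≥ 2` on `[0, 1/2]` (real powers). -/
theorem statement8 (γ : ℝ) (hγ : γ = Real.log (3 / 2) / Real.log 2) :
    γ ∈ Set.Ioo (0 : ℝ) 1 ∧
    ConcaveOn ℝ (Set.Icc (0 : ℝ) (1 / 2))
      (fun u : ℝ => u ^ γ + 2 * (1 - u) ^ γ) ∧
    ((0 : ℝ) ^ γ + 2 * (1 - (0 : ℝ)) ^ γ = 2) ∧
    ((1 / 2 : ℝ) ^ γ + 2 * (1 - (1 / 2 : ℝ)) ^ γ = 2) ∧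
    ∀ u ∈ Set.Icc (0 : ℝ) (1 / 2), 2 ≤ u ^ γ + 2 * (1 - u) ^ γ := by
  have hlog2 : (0 : ℝ) < Real.log 2 := Real.log_pos (by norm_num)
  have hlog32 : (0 : ℝ) < Real.log (3 / 2) := Real.log_pos (by norm_num)
  have hlt : Real.log (3 / 2) < Real.log 2 := Real.log_lt_log (by norm_num) (by norm_num)
  have hγ0 : 0 < γ := by rw [hγ]; positivity
  have hγ1 : γ < 1 := by
    rw [hγ, div_lt_one hlog2]; exact hlt
  have hmem : γ ∈ Set.Ioo (0 : ℝ) 1 := ⟨hγ0, hγ1⟩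
  -- concavity
  have hbase : ConcaveOn ℝ (Set.Ici (0 : ℝ)) fun x : ℝ => x ^ γ :=
    Real.concaveOn_rpow hγ0.le hγ1.le
  have h1 : ConcaveOn ℝ (Set.Icc (0 : ℝ) (1 / 2)) fun u : ℝ => u ^ γ :=
    hbase.subset (fun x hx => hx.1) (convex_Icc _ _)
  have h2 : ConcaveOn ℝ (Set.Icc (0 : ℝ) (1 / 2)) fun u : ℝ => (1 - u) ^ γ := by
    refine ⟨convex_Icc _ _, fun x hx y hy a b ha hb hab => ?_⟩
    have key := hbase.2 (x := 1 - x) (y := 1 - y) (by simp; linarith [hx.2]) (by simp; linarith [hy.2]) ha hb hab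
    have heq : a • (1 - x) + b • (1 - y) = 1 - (a • x + b • y) := by
      simp only [smul_eq_mul]; nlinarith
    rw [heq] at key
    simpa using key
  have h2' : ConcaveOn ℝ (Set.Icc (0 : ℝ) (1 / 2)) fun u : ℝ => 2 * (1 - u) ^ γ := by
    simpa [smul_eq_mul] using h2.smul (by norm_num : (0:ℝ) ≤ 2)
  have hconc : ConcaveOn ℝ (Set.Icc (0 : ℝ) (1 / 2))
      (fun u : ℝ => u ^ γ + 2 * (1 - u) ^ γ) := h1.add h2'
  -- values
  have hv0 : (0 : ℝ) ^ γ + 2 * (1 - (0 : ℝ)) ^ γ = 2 := by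
    rw [Real.zero_rpow hγ0.ne']; norm_num
  have h2γ : (2 : ℝ) ^ γ = 3 / 2 := by
    rw [Real.rpow_def_of_pos (by norm_num : (0:ℝ) < 2)]
    rw [hγ, mul_comm, div_mul_cancel₀ _ hlog2.ne']
    exact Real.exp_log (by norm_num)
  have hhalf : ((1 / 2 : ℝ)) ^ γ = 2 / 3 := by
    rw [show (1/2 : ℝ) = (2 : ℝ)⁻¹ by norm_num, Real.inv_rpow (by norm_num), h2γ]
    norm_num
  have hv1 : ((1 / 2 : ℝ)) ^ γ + 2 * (1 - (1 / 2 : ℝ)) ^ γ = 2 := by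
    norm_num [hhalf]
  refine ⟨hmem, hconc, hv0, hv1, fun u hu => ?_⟩
  have := hconc.min_le_of_mem_Icc (x := 0) (y := 1/2)
    (by constructor <;> norm_num) (by constructor <;> norm_num) hu
  rw [hv0, hv1] at this
  simpa using this
end

section
/- Let a < b, M > 0 and κ ∈ (0,1) be real numbers, and let (φ_k)_{k≥0} be a sequence of functions on [a, b] such that each φ_k is twice differentiable on [a, b] with |φ_k''(x)| ≤ M for all x ∈ [a, b], and such that sup_{x ∈ [a,b]} |φ_{k+1}(x) − φ_k(x)| ≤ M·κ^k for all k. Then there exist functions φ, ψ on [a, b] such that φ_k → φ uniformly on [a, b], φ_k' → ψ uniformly on [a, b], φ is differentiable on [a, b] with derivative ψ, and ψ is Lipschitz on [a, b] with Lipschitz constant M. -/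
open Filter Set Topology

/-- Geometric pointwise Cauchy control implies existence of a uniform limit. -/
lemma geom_unif_limit {s : Set ℝ} {u : ℕ → ℝ → ℝ} {C r : ℝ} (hr0 : 0 ≤ r) (hr1 : r < 1)
    (h : ∀ k, ∀ x ∈ s, |u (k + 1) x - u k x| ≤ C * r ^ k) :
    ∃ v : ℝ → ℝ, (∀ x ∈ s, Tendsto (fun k => u k x) atTop (𝓝 (v x))) ∧
      TendstoUniformlyOn u v atTop s := by
  have key : ∀ x : ℝ, ∃ l : ℝ, x ∈ s → Tendsto (fun k => u k x) atTop (𝓝 l) := by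
    intro x
    by_cases hx : x ∈ s
    · have hcau : CauchySeq (fun k => u k x) := by
        apply cauchySeq_of_le_geometric r C hr1
        intro n
        rw [Real.dist_eq, abs_sub_comm]
        exact h n x hx
      obtain ⟨l, hl⟩ := cauchySeq_tendsto_of_complete hcau
      exact ⟨l, fun _ => hl⟩
    · exact ⟨0, fun hx' => absurd hx' hx⟩
  choose v hv using key
  refine ⟨v, fun x hx => hv x hx, ?_⟩
  rw [Metric.tendstoUniformlyOn_iff]
  intro ε hε
  have hdist : ∀ n, ∀ x ∈ s, dist (u n x) (v x) ≤ C * r ^ n / (1 - r) := by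
    intro n x hx
    refine dist_le_of_le_geometric_of_tendsto r C hr1 ?_ (hv x hx) n
    intro m
    rw [Real.dist_eq, abs_sub_comm]
    exact h m x hx
  have htend : Tendsto (fun n : ℕ => C * r ^ n / (1 - r)) atTop (𝓝 0) := by
    have := tendsto_pow_atTop_nhds_zero_of_lt_one hr0 hr1
    have := (this.const_mul C).div_const (1 - r)
    simpa using this
  filter_upwards [htend.eventually (gt_mem_nhds hε)] with n hn x hx
  rw [dist_comm]
  exact lt_of_le_of_lt (hdist n x hx) hn

/-- Lipschitz bound from a bounded derivative on `Icc a b`. -/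
lemma lip_of_deriv_bound {a b M : ℝ} {g g' : ℝ → ℝ}
    (hd : ∀ x ∈ Set.Icc a b, HasDerivWithinAt g (g' x) (Set.Icc a b) x)
    (hb : ∀ x ∈ Set.Icc a b, |g' x| ≤ M) :
    ∀ x ∈ Set.Icc a b, ∀ y ∈ Set.Icc a b, |g y - g x| ≤ M * |y - x| := by
  intro x hx y hy
  have := (convex_Icc a b).norm_image_sub_le_of_norm_hasDerivWithin_le hd
    (fun z hz => by simpa using hb z hz) hx hy
  simpa [Real.norm_eq_abs] using this

/-- Taylor-type bound: `|g y - g x - g' x (y - x)| ≤ M |y - x|²` when `g'` is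
`M`-Lipschitz on `Icc a b`. -/
lemma taylor_bound {a b M : ℝ} {g g' : ℝ → ℝ}
    (hd : ∀ x ∈ Set.Icc a b, HasDerivWithinAt g (g' x) (Set.Icc a b) x)
    (hlip : ∀ x ∈ Set.Icc a b, ∀ y ∈ Set.Icc a b, |g' y - g' x| ≤ M * |y - x|)
    (hM : 0 ≤ M) :
    ∀ x ∈ Set.Icc a b, ∀ y ∈ Set.Icc a b,
      |g y - g x - g' x * (y - x)| ≤ M * |y - x| ^ 2 := by
  intro x hx y hy
  set t : Set ℝ := Set.uIcc x y with ht
  have hts : t ⊆ Set.Icc a b := Set.uIcc_subset_Icc hx hy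
  have hconv : Convex ℝ t := convex_uIcc x y
  -- F z = g z - g' x * z, derivative g' z - g' x
  have hdF : ∀ z ∈ t, HasDerivWithinAt (fun w => g w - g' x * w) (g' z - g' x) t z := by
    intro z hz
    have h1 : HasDerivWithinAt (fun w => g' x * w) (g' x) t z := by
      simpa using (hasDerivWithinAt_id z t).const_mul (g' x)
    exact ((hd z (hts hz)).mono hts).sub h1
  have hbF : ∀ z ∈ t, ‖g' z - g' x‖ ≤ M * |y - x| := by
    intro z hz
    have h1 : |g' z - g' x| ≤ M * |z - x| := hlip x hx z (hts hz)
    have h2 : |z - x| ≤ |y - x| := by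
      rcases Set.mem_uIcc.mp hz with ⟨ha1, ha2⟩ | ⟨ha1, ha2⟩
      · rw [abs_of_nonneg (by linarith : (0:ℝ) ≤ z - x),
          abs_of_nonneg (by linarith : (0:ℝ) ≤ y - x)]
        linarith
      · rw [abs_of_nonpos (by linarith : z - x ≤ 0),
          abs_of_nonpos (by linarith : y - x ≤ 0)]
        linarith
    calc ‖g' z - g' x‖ = |g' z - g' x| := rfl
      _ ≤ M * |z - x| := h1
      _ ≤ M * |y - x| := by apply mul_le_mul_of_nonneg_left h2 hM
  have := hconv.norm_image_sub_le_of_norm_hasDerivWithin_le hdF hbF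
    (Set.left_mem_uIcc) (Set.right_mem_uIcc)
  have h' : |(g y - g' x * y) - (g x - g' x * x)| ≤ M * |y - x| * |y - x| := by
    simpa [Real.norm_eq_abs] using this
  calc |g y - g x - g' x * (y - x)| = |(g y - g' x * y) - (g x - g' x * x)| := by
        ring_nf
    _ ≤ M * |y - x| * |y - x| := h'
    _ = M * |y - x| ^ 2 := by ring

/-- Analytic core of Proposition 39: if `φ_k` are twice differentiable on `[a, b]`
(one-sided at the endpoints) with `|φ_k''| ≤ M`, and
`sup_{[a,b]} |φ_{k+1} − φ_k| ≤ M κ^k` with `κ ∈ (0,1)`, then `φ_k` and `φ_k'`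
converge uniformly on `[a, b]` to `φ` and `ψ` respectively, `φ` is differentiable
on `[a, b]` with derivative `ψ`, and `ψ` is Lipschitz with constant `M`. -/
theorem statement14 (a b M κ : ℝ) (hab : a < b) (hM : 0 < M)
    (hκ : κ ∈ Set.Ioo (0 : ℝ) 1)
    (f f' f'' : ℕ → ℝ → ℝ)
    (hd1 : ∀ k, ∀ x ∈ Set.Icc a b, HasDerivWithinAt (f k) (f' k x) (Set.Icc a b) x)
    (hd2 : ∀ k, ∀ x ∈ Set.Icc a b, HasDerivWithinAt (f' k) (f'' k x) (Set.Icc a b) x)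
    (hbound : ∀ k, ∀ x ∈ Set.Icc a b, |f'' k x| ≤ M)
    (hgeom : ∀ k, ∀ x ∈ Set.Icc a b, |f (k + 1) x - f k x| ≤ M * κ ^ k) :
    ∃ φ ψ : ℝ → ℝ,
      TendstoUniformlyOn f φ Filter.atTop (Set.Icc a b) ∧
      TendstoUniformlyOn f' ψ Filter.atTop (Set.Icc a b) ∧
      (∀ x ∈ Set.Icc a b, HasDerivWithinAt φ (ψ x) (Set.Icc a b) x) ∧
      (∀ x ∈ Set.Icc a b, ∀ y ∈ Set.Icc a b, |ψ x - ψ y| ≤ M * |x - y|) := by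
  obtain ⟨hκ0, hκ1⟩ := hκ
  -- Lipschitz constant M for each f' k
  have hlip : ∀ k, ∀ x ∈ Set.Icc a b, ∀ y ∈ Set.Icc a b,
      |f' k y - f' k x| ≤ M * |y - x| := by
    intro k x hx y hy
    exact lip_of_deriv_bound (hd2 k) (hbound k) x hx y hy
  -- Taylor bound for each f k
  have htay : ∀ k, ∀ x ∈ Set.Icc a b, ∀ y ∈ Set.Icc a b,
      |f k y - f k x - f' k x * (y - x)| ≤ M * |y - x| ^ 2 :=
    fun k => taylor_bound (hd1 k) (fun x hx y hy => hlip k x hx y hy) hM.le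
  -- set r = √κ
  set r : ℝ := Real.sqrt κ with hr
  have hr0 : 0 < r := Real.sqrt_pos.mpr hκ0
  have hr1 : r < 1 := by
    rw [hr, show (1:ℝ) = Real.sqrt 1 by simp]
    exact Real.sqrt_lt_sqrt hκ0.le hκ1
  have hrsq : r ^ 2 = κ := Real.sq_sqrt hκ0.le
  -- Landau: |f' (k+1) x - f' k x| ≤ C * r^k
  set C : ℝ := 2 * M * (2 / (b - a) + 2) with hC
  have hba : (0:ℝ) < b - a := by linarith
  have h2ba : (0:ℝ) < 2 / (b - a) := div_pos two_pos hba
  have hC0 : 0 < C := by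
    apply mul_pos (by linarith)
    linarith
  have hkey : ∀ k, ∀ x ∈ Set.Icc a b, |f' (k + 1) x - f' k x| ≤ C * r ^ k := by
    intro k x hx
    set h : ℝ := min ((b - a) / 2) (r ^ k) with hh
    have hh0 : 0 < h := lt_min (by linarith) (pow_pos hr0 k)
    -- choose y in the interval at distance h from x
    obtain ⟨y, hy, hyx⟩ : ∃ y ∈ Set.Icc a b, |y - x| = h := by
      rcases le_total x ((a + b) / 2) with hx2 | hx2
      · refine ⟨x + h, ⟨by linarith [hx.1], ?_⟩, by simp [abs_of_nonneg hh0.le]⟩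
        have : h ≤ (b - a) / 2 := min_le_left _ _
        linarith
      · refine ⟨x - h, ⟨?_, by linarith [hx.2]⟩, ?_⟩
        · have : h ≤ (b - a) / 2 := min_le_left _ _
          linarith
        · rw [show x - h - x = -h by ring, abs_neg, abs_of_nonneg hh0.le]
    -- Taylor for g = f (k+1) - f k
    have t1 := htay (k + 1) x hx y hy
    have t2 := htay k x hx y hy
    have hg1 := hgeom k x hx
    have hg2 := hgeom k y hy
    -- |(f'(k+1) x - f' k x) * (y - x)| ≤ 2 M κ^k + 2 M h^2
    have hstep : |(f' (k + 1) x - f' k x)| * h ≤ 2 * M * κ ^ k + 2 * M * h ^ 2 := by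
      have e1 : (f' (k + 1) x - f' k x) * (y - x) =
          (f (k + 1) y - f (k + 1) x - f' (k + 1) x * (y - x)) * (-1)
          + (f k y - f k x - f' k x * (y - x))
          + (f (k + 1) y - f k y) + (f k x - f (k + 1) x) := by ring
      have hsum : |(f' (k + 1) x - f' k x) * (y - x)| ≤
          |f (k + 1) y - f (k + 1) x - f' (k + 1) x * (y - x)|
          + |f k y - f k x - f' k x * (y - x)|
          + |f (k + 1) y - f k y| + |f (k + 1) x - f k x| := by
        rw [e1]
        have ha := abs_add_le (((f (k+1) y - f (k+1) x - f' (k+1) x * (y-x)) * (-1)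
          + (f k y - f k x - f' k x * (y-x))) + (f (k+1) y - f k y)) (f k x - f (k+1) x)
        have h2 := abs_add_le ((f (k+1) y - f (k+1) x - f' (k+1) x * (y-x)) * (-1)
          + (f k y - f k x - f' k x * (y-x))) (f (k+1) y - f k y)
        have h3 := abs_add_le ((f (k+1) y - f (k+1) x - f' (k+1) x * (y-x)) * (-1))
          (f k y - f k x - f' k x * (y-x))
        have h4 : |(f (k+1) y - f (k+1) x - f' (k+1) x * (y-x)) * (-1)|
            = |f (k+1) y - f (k+1) x - f' (k+1) x * (y-x)| := by
          rw [abs_mul]; simp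
        have h5 : |f k x - f (k+1) x| = |f (k+1) x - f k x| := abs_sub_comm _ _
        linarith
      have hsum2 : |(f' (k + 1) x - f' k x) * (y - x)| ≤
          M * |y - x| ^ 2 + M * |y - x| ^ 2 + M * κ ^ k + M * κ ^ k := by linarith
      rw [abs_mul, hyx] at hsum2
      linarith
    have hdivh : |f' (k + 1) x - f' k x| ≤ 2 * M * κ ^ k / h + 2 * M * h := by
      rw [div_add' _ _ _ (ne_of_gt hh0), le_div_iff₀ hh0]
      calc |f' (k + 1) x - f' k x| * h ≤ 2 * M * κ ^ k + 2 * M * h ^ 2 := hstep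
        _ = 2 * M * κ ^ k + 2 * M * h * h := by ring
    -- bound 2Mκ^k/h + 2Mh ≤ C r^k
    have hbound1 : κ ^ k / h ≤ (2 / (b - a)) * r ^ k + r ^ k := by
      have hinv : 1 / h ≤ 2 / (b - a) + 1 / r ^ k := by
        rcases min_cases ((b - a) / 2) (r ^ k) with ⟨he, _⟩ | ⟨he, _⟩
        · rw [hh, he]
          have he2 : 1 / ((b-a)/2) = 2 / (b - a) := by
            field_simp
          rw [he2]
          have : 0 < 1 / r ^ k := by positivity
          linarith
        · rw [hh, he]
          linarith
      have hκk : κ ^ k = r ^ k * r ^ k := by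
        rw [← mul_pow, ← sq, hrsq]
      have hrk1 : r ^ k ≤ 1 := pow_le_one₀ hr0.le hr1.le
      calc κ ^ k / h = κ ^ k * (1 / h) := by ring
        _ ≤ κ ^ k * (2 / (b - a) + 1 / r ^ k) := by
            apply mul_le_mul_of_nonneg_left hinv (by positivity)
        _ = κ ^ k * (2 / (b - a)) + κ ^ k / r ^ k := by ring
        _ = κ ^ k * (2 / (b - a)) + r ^ k := by
            rw [hκk]; field_simp
        _ ≤ r ^ k * (2 / (b - a)) + r ^ k := by
            have hle : κ ^ k ≤ r ^ k := by
              rw [hκk]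
              nlinarith [pow_pos hr0 k]
            nlinarith
        _ = (2 / (b - a)) * r ^ k + r ^ k := by ring
    have hh_le : h ≤ r ^ k := min_le_right _ _
    calc |f' (k + 1) x - f' k x| ≤ 2 * M * κ ^ k / h + 2 * M * h := hdivh
      _ = 2 * M * (κ ^ k / h) + 2 * M * h := by ring
      _ ≤ 2 * M * ((2 / (b - a)) * r ^ k + r ^ k) + 2 * M * r ^ k := by
          have := mul_le_mul_of_nonneg_left hbound1 (by positivity : (0:ℝ) ≤ 2 * M)
          have := mul_le_mul_of_nonneg_left hh_le (by positivity : (0:ℝ) ≤ 2 * M)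
          linarith
      _ = C * r ^ k := by rw [hC]; ring
  -- uniform limits
  obtain ⟨φ, hφpt, hφu⟩ := geom_unif_limit hκ0.le hκ1 hgeom
  obtain ⟨ψ, hψpt, hψu⟩ := geom_unif_limit hr0.le hr1 hkey
  refine ⟨φ, ψ, hφu, hψu, ?_, ?_⟩
  · -- differentiability of φ with derivative ψ
    intro x hx
    rw [hasDerivWithinAt_iff_isLittleO]
    rw [Asymptotics.isLittleO_iff]
    intro c hc
    -- limit Taylor bound
    have hT : ∀ y ∈ Set.Icc a b, |φ y - φ x - ψ x * (y - x)| ≤ M * |y - x| ^ 2 := by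
      intro y hy
      have hlim : Tendsto (fun k => f k y - f k x - f' k x * (y - x)) atTop
          (𝓝 (φ y - φ x - ψ x * (y - x))) :=
        ((hφpt y hy).sub (hφpt x hx)).sub ((hψpt x hx).mul_const (y - x))
      have : Tendsto (fun k => |f k y - f k x - f' k x * (y - x)|) atTop
          (𝓝 |φ y - φ x - ψ x * (y - x)|) := hlim.abs
      exact le_of_tendsto this (Filter.Eventually.of_forall fun k => htay k x hx y hy)
    have hev : ∀ᶠ y in nhdsWithin x (Set.Icc a b), |y - x| ≤ c / M := by
      have : ∀ᶠ y in 𝓝 x, |y - x| ≤ c / M := by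
        have hpos : 0 < c / M := by positivity
        have : Metric.ball x (c / M) ∈ 𝓝 x := Metric.ball_mem_nhds x hpos
        filter_upwards [this] with y hy
        rw [Metric.mem_ball, Real.dist_eq] at hy
        exact hy.le
      exact this.filter_mono nhdsWithin_le_nhds
    have hmem : ∀ᶠ y in nhdsWithin x (Set.Icc a b), y ∈ Set.Icc a b :=
      eventually_mem_nhdsWithin
    filter_upwards [hev, hmem] with y hyc hymem
    have h1 := hT y hymem
    have : M * |y - x| ^ 2 ≤ c * |y - x| := by
      have : M * |y - x| ≤ c := by
        calc M * |y - x| ≤ M * (c / M) := by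
              apply mul_le_mul_of_nonneg_left hyc hM.le
          _ = c := by field_simp
      nlinarith [abs_nonneg (y - x)]
    calc ‖φ y - φ x - (y - x) • ψ x‖ = |φ y - φ x - ψ x * (y - x)| := by
          rw [Real.norm_eq_abs, smul_eq_mul, mul_comm]
      _ ≤ M * |y - x| ^ 2 := h1
      _ ≤ c * |y - x| := this
      _ = c * ‖y - x‖ := by rw [Real.norm_eq_abs]
  · -- ψ is M-Lipschitz
    intro x hx y hy
    have hlim : Tendsto (fun k => f' k x - f' k y) atTop (𝓝 (ψ x - ψ y)) :=
      (hψpt x hx).sub (hψpt y hy)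
    have : Tendsto (fun k => |f' k x - f' k y|) atTop (𝓝 |ψ x - ψ y|) := hlim.abs
    refine le_of_tendsto this (Filter.Eventually.of_forall fun k => ?_)
    exact hlip k y hy x hx
end
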